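/- arXiv:1507.08788 — 4 statements merged into one kernel-verified Lean document; each statement's English description precedes it below -/
import Mathlib

section
/- Let B be a k×k real matrix all of whose singular values lie in [δ, 1] for some δ ∈ [0,1]. Then 1 − ‖BᵀB‖_F²/‖B‖_F² ≥ (δ²/k)(k − ‖B‖_F²). -/
open scoped BigOperators
open Matrix

/-- The Frobenius norm of a real matrix. -/
noncomputable def frobNorm {m n : Type*} [Fintype m] [Fintype n] (B : Matrix m n ℝ) : ℝ :=
  Real.sqrt (∑ i, ∑ j, (B i j) ^ 2)

lemma frobSq_eq_trace {k : ℕ} (M : Matrix (Fin k) (Fin k) ℝ) :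
    frobNorm M ^ 2 = Matrix.trace (M * Mᵀ) := by
  rw [frobNorm, Real.sq_sqrt (by positivity)]
  simp [Matrix.trace, Matrix.mul_apply, Matrix.diag, pow_two]

/-- Let `B` be a `k×k` real matrix all of whose singular values lie in `[δ, 1]`
(expressed via a singular value decomposition `B = U * diagonal σ * Vᵀ` with `U, V`
orthogonal and `σ i ∈ [δ, 1]`).  Then
`1 - ‖BᵀB‖_F² / ‖B‖_F² ≥ (δ²/k) (k - ‖B‖_F²)`. -/
theorem one_sub_frob_ratio_ge_of_sv_bounds {k : ℕ} (δ : ℝ) (hδ : δ ∈ Set.Icc (0:ℝ) 1)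
    (B U V : Matrix (Fin k) (Fin k) ℝ) (σ : Fin k → ℝ)
    (hU : Uᵀ * U = 1) (hV : Vᵀ * V = 1)
    (hB : B = U * Matrix.diagonal σ * Vᵀ)
    (hσ : ∀ i, σ i ∈ Set.Icc δ 1) :
    (δ ^ 2 / (k : ℝ)) * ((k : ℝ) - frobNorm B ^ 2)
      ≤ 1 - frobNorm (Bᵀ * B) ^ 2 / frobNorm B ^ 2 := by
  have hDD : Matrix.diagonal σ * Matrix.diagonal σ
      = Matrix.diagonal (fun i => σ i ^ 2) := by
    rw [Matrix.diagonal_mul_diagonal]; congr 1; ext i; ring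
  have hD4 : Matrix.diagonal (fun i => σ i ^ 2) * Matrix.diagonal (fun i => σ i ^ 2)
      = Matrix.diagonal (fun i => σ i ^ 4) := by
    rw [Matrix.diagonal_mul_diagonal]; congr 1; ext i; ring
  have hBt : Bᵀ = V * Matrix.diagonal σ * Uᵀ := by
    rw [hB]; simp [Matrix.transpose_mul, Matrix.mul_assoc]
  have hBBt : B * Bᵀ = U * Matrix.diagonal (fun i => σ i ^ 2) * Uᵀ := by
    rw [hBt, hB]
    simp only [Matrix.mul_assoc]
    rw [← Matrix.mul_assoc Vᵀ V, hV, Matrix.one_mul,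
      ← Matrix.mul_assoc (Matrix.diagonal σ) (Matrix.diagonal σ) Uᵀ, hDD]
  have hBtB : Bᵀ * B = V * Matrix.diagonal (fun i => σ i ^ 2) * Vᵀ := by
    rw [hBt, hB]
    simp only [Matrix.mul_assoc]
    rw [← Matrix.mul_assoc Uᵀ U, hU, Matrix.one_mul,
      ← Matrix.mul_assoc (Matrix.diagonal σ) (Matrix.diagonal σ) Vᵀ, hDD]
  have htr : ∀ (A : Matrix (Fin k) (Fin k) ℝ) (f : Fin k → ℝ), Aᵀ * A = 1 →
      Matrix.trace (A * (Matrix.diagonal f * Aᵀ)) = ∑ i, f i := by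
    intro A f hA
    rw [← Matrix.mul_assoc, Matrix.trace_mul_comm, ← Matrix.mul_assoc, hA,
      Matrix.one_mul, Matrix.trace_diagonal]
  have hs : frobNorm B ^ 2 = ∑ i, σ i ^ 2 := by
    rw [frobSq_eq_trace, hBBt, Matrix.mul_assoc, htr U _ hU]
  have hq : frobNorm (Bᵀ * B) ^ 2 = ∑ i, σ i ^ 4 := by
    rw [frobSq_eq_trace]
    have hsym : (Bᵀ * B)ᵀ = Bᵀ * B := by
      rw [Matrix.transpose_mul, Matrix.transpose_transpose]
    rw [hsym, hBtB]
    simp only [Matrix.mul_assoc]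
    rw [← Matrix.mul_assoc Vᵀ V, hV, Matrix.one_mul,
      ← Matrix.mul_assoc (Matrix.diagonal fun i => σ i ^ 2)
        (Matrix.diagonal fun i => σ i ^ 2) Vᵀ, hD4, htr V _ hV]
  rw [hs, hq]
  set s := ∑ i, σ i ^ 2 with hsdef
  set q := ∑ i, σ i ^ 4 with hqdef
  have hδ0 := hδ.1
  have hδ1 := hδ.2
  have hsq : ∀ i, δ ^ 2 ≤ σ i ^ 2 ∧ σ i ^ 2 ≤ 1 ∧ σ i ^ 4 ≤ σ i ^ 2 := by
    intro i
    obtain ⟨h1, h2⟩ := hσ i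
    have h0 : 0 ≤ σ i := le_trans hδ0 h1
    have h2' : σ i ^ 2 ≤ 1 := by nlinarith
    exact ⟨by nlinarith, h2', by nlinarith [sq_nonneg (σ i), h2']⟩
  have hsk : s ≤ (k : ℝ) := by
    calc s ≤ ∑ _i : Fin k, (1:ℝ) := Finset.sum_le_sum fun i _ => (hsq i).2.1
      _ = k := by simp
  have hkey : δ ^ 2 * ((k:ℝ) - s) ≤ s - q := by
    have hle : ∑ i, δ ^ 2 * (1 - σ i ^ 2) ≤ ∑ i, σ i ^ 2 * (1 - σ i ^ 2) := by
      apply Finset.sum_le_sum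
      intro i _
      have h := hsq i
      nlinarith [h.1, h.2.1]
    have e1 : ∑ i, δ ^ 2 * (1 - σ i ^ 2) = δ ^ 2 * ((k:ℝ) - s) := by
      simp only [mul_sub, mul_one, Finset.sum_sub_distrib, Finset.sum_const,
        Finset.card_univ, Fintype.card_fin, nsmul_eq_mul, ← Finset.mul_sum, ← hsdef]
      ring
    have e2 : ∑ i, σ i ^ 2 * (1 - σ i ^ 2) = s - q := by
      rw [hsdef, hqdef, ← Finset.sum_sub_distrib]
      apply Finset.sum_congr rfl
      intro i _; ring
    rw [e1, e2] at hle
    exact hle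
  rcases Nat.eq_zero_or_pos k with hk | hk
  · subst hk
    simp [hsdef, hqdef]
  have hk' : (0:ℝ) < k := by exact_mod_cast hk
  rcases eq_or_lt_of_le (show (0:ℝ) ≤ s from Finset.sum_nonneg fun i _ => sq_nonneg _)
    with h0 | h0
  · have hσ0 : ∀ i, σ i ^ 2 = 0 := fun i =>
      (Finset.sum_eq_zero_iff_of_nonneg (fun i _ => sq_nonneg (σ i))).mp h0.symm i
        (Finset.mem_univ i)
    have hq0 : q = 0 := by
      rw [hqdef]
      apply Finset.sum_eq_zero
      intro i _
      calc σ i ^ 4 = (σ i ^ 2) ^ 2 := by ring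
        _ = 0 := by rw [hσ0 i]; norm_num
    rw [← h0, hq0]
    simp only [zero_div, sub_zero]
    rw [div_mul_eq_mul_div, mul_div_assoc, div_self (ne_of_gt hk'), mul_one]
    nlinarith
  · have heq : 1 - q / s = (s - q) / s := by field_simp
    rw [heq, le_div_iff₀ h0]
    have h1 : δ ^ 2 / (k:ℝ) * ((k:ℝ) - s) * s ≤ δ ^ 2 * ((k:ℝ) - s) := by
      rw [div_mul_eq_mul_div, div_mul_eq_mul_div, div_le_iff₀ hk']
      nlinarith [mul_nonneg (mul_nonneg (sq_nonneg δ) (sub_nonneg.mpr hsk)) (sub_nonneg.mpr hsk)]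
    linarith
end

section
/- Let C and D be d×k real matrices with orthonormal columns, let CᵀD = USVᵀ be a singular value decomposition, and set B = VUᵀ. Then ‖C − DB‖_F² ≤ 2(k − ‖CᵀD‖_F²). -/
open scoped BigOperators
open Matrix

lemma frobNorm_sq {m n : Type*} [Fintype m] [Fintype n] (B : Matrix m n ℝ) :
    frobNorm B ^ 2 = Matrix.trace (Bᵀ * B) := by
  rw [frobNorm, Real.sq_sqrt (by positivity)]
  rw [Matrix.trace]
  simp only [Matrix.diag, Matrix.mul_apply, Matrix.transpose_apply]
  rw [Finset.sum_comm]
  congr 1; funext i; congr 1; funext j; ring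

lemma dot_mulVec_self {d k : ℕ} (A : Matrix (Fin d) (Fin k) ℝ) (x : Fin k → ℝ) :
    (A *ᵥ x) ⬝ᵥ (A *ᵥ x) = x ⬝ᵥ ((Aᵀ * A) *ᵥ x) := by
  rw [← mulVec_mulVec, dotProduct_mulVec, ← mulVec_transpose, dotProduct_comm]

lemma contract {d k : ℕ} (C : Matrix (Fin d) (Fin k) ℝ) (hC : Cᵀ * C = 1) (x : Fin d → ℝ) :
    (Cᵀ *ᵥ x) ⬝ᵥ (Cᵀ *ᵥ x) ≤ x ⬝ᵥ x := by
  set y := Cᵀ *ᵥ x with hy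
  set p := C *ᵥ y with hp
  have hpp : p ⬝ᵥ p = y ⬝ᵥ y := by
    rw [hp, dot_mulVec_self, hC, one_mulVec]
  have hxp : x ⬝ᵥ p = y ⬝ᵥ y := by
    rw [hp, dotProduct_mulVec, ← mulVec_transpose, ← hy]
  have hnn : 0 ≤ (x - p) ⬝ᵥ (x - p) := by
    apply Finset.sum_nonneg
    intro i _
    simp only [Pi.sub_apply]
    exact mul_self_nonneg _
  have hexp : (x - p) ⬝ᵥ (x - p) = x ⬝ᵥ x - 2 * (y ⬝ᵥ y) + p ⬝ᵥ p := by
    rw [sub_dotProduct, dotProduct_sub, dotProduct_sub, ← hxp, dotProduct_comm p x]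
    ring
  nlinarith [hnn, hexp, hpp]

/-- Let `C` and `D` be `d×k` real matrices with orthonormal columns, let
`Cᵀ D = U S Vᵀ` be a singular value decomposition, and set `B = V Uᵀ`.  Then
`‖C - D B‖_F² ≤ 2 (k - ‖Cᵀ D‖_F²)`. -/
theorem frob_sq_sub_le_two_mul {d k : ℕ}
    (C D : Matrix (Fin d) (Fin k) ℝ)
    (hC : Cᵀ * C = 1) (hD : Dᵀ * D = 1)
    (U V : Matrix (Fin k) (Fin k) ℝ) (s : Fin k → ℝ)
    (hU : Uᵀ * U = 1) (hV : Vᵀ * V = 1) (hs : ∀ i, 0 ≤ s i)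
    (hSVD : Cᵀ * D = U * Matrix.diagonal s * Vᵀ) :
    frobNorm (C - D * (V * Uᵀ)) ^ 2 ≤ 2 * ((k : ℝ) - frobNorm (Cᵀ * D) ^ 2) := by
  have hUUt : U * Uᵀ = 1 := mul_eq_one_comm.mp hU
  have hVVt : V * Vᵀ = 1 := mul_eq_one_comm.mp hV
  -- step 1: each singular value is at most 1
  have hs1 : ∀ i, s i ≤ 1 := by
    intro i
    set v : Fin k → ℝ := fun l => V l i with hv
    have hvv : v ⬝ᵥ v = 1 := by
      have := congrFun (congrFun hV i) i
      simpa [Matrix.mul_apply, Matrix.one_apply, dotProduct, hv] using this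
    have hVtv : Vᵀ *ᵥ v = fun j => if j = i then (1:ℝ) else 0 := by
      funext j
      have := congrFun (congrFun hV j) i
      simpa [Matrix.mul_apply, Matrix.one_apply, mulVec, dotProduct, hv] using this
    have hMv : (Cᵀ * D) *ᵥ v = fun j => U j i * s i := by
      rw [hSVD, ← mulVec_mulVec, ← mulVec_mulVec, hVtv]
      funext j
      simp [mulVec, dotProduct, Matrix.diagonal, mul_ite, Finset.sum_ite_eq]
    have hnormMv : ((Cᵀ * D) *ᵥ v) ⬝ᵥ ((Cᵀ * D) *ᵥ v) = s i ^ 2 := by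
      rw [hMv]
      have hU1 : (∑ j, U j i * U j i) = 1 := by
        have := congrFun (congrFun hU i) i
        simpa [Matrix.mul_apply, Matrix.one_apply] using this
      calc (fun j => U j i * s i) ⬝ᵥ (fun j => U j i * s i)
          = (∑ j, U j i * U j i) * s i ^ 2 := by
            simp only [dotProduct, Finset.sum_mul]; congr 1; funext j; ring
        _ = s i ^ 2 := by rw [hU1, one_mul]
    have hle : ((Cᵀ * D) *ᵥ v) ⬝ᵥ ((Cᵀ * D) *ᵥ v) ≤ 1 := by
      have h1 : (Cᵀ * D) *ᵥ v = Cᵀ *ᵥ (D *ᵥ v) := by rw [mulVec_mulVec]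
      rw [h1]
      have h2 := contract C hC (D *ᵥ v)
      have h3 : (D *ᵥ v) ⬝ᵥ (D *ᵥ v) = 1 := by
        rw [dot_mulVec_self, hD, one_mulVec, hvv]
      linarith
    nlinarith [hs i, hnormMv ▸ hle]
  -- step 2: trace computations
  set B := V * Uᵀ with hB
  have key1 : frobNorm (C - D * B) ^ 2 = 2 * (k : ℝ) - 2 * ∑ i, s i := by
    rw [frobNorm_sq]
    have hexp : (C - D * B)ᵀ * (C - D * B) =
        Cᵀ * C - Cᵀ * (D * B) - (D * B)ᵀ * C + (D * B)ᵀ * (D * B) := by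
      rw [Matrix.transpose_sub, Matrix.sub_mul, Matrix.mul_sub, Matrix.mul_sub]
      abel
    rw [hexp, Matrix.trace_add, Matrix.trace_sub, Matrix.trace_sub]
    have t1 : Matrix.trace (Cᵀ * C) = (k : ℝ) := by rw [hC, Matrix.trace_one]; simp
    have hCtDB : Cᵀ * (D * B) = U * Matrix.diagonal s * Uᵀ := by
      rw [← Matrix.mul_assoc, hSVD, hB,
        Matrix.mul_assoc (U * Matrix.diagonal s) Vᵀ (V * Uᵀ), ← Matrix.mul_assoc Vᵀ V Uᵀ, hV,
        Matrix.one_mul]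
    have t2 : Matrix.trace (Cᵀ * (D * B)) = ∑ i, s i := by
      rw [hCtDB, Matrix.trace_mul_cycle, hU, Matrix.one_mul, Matrix.trace_diagonal]
    have t3 : Matrix.trace ((D * B)ᵀ * C) = ∑ i, s i := by
      have h : (Cᵀ * (D * B))ᵀ = (D * B)ᵀ * C := by
        rw [Matrix.transpose_mul, Matrix.transpose_transpose]
      rw [← h, Matrix.trace_transpose, t2]
    have t4 : Matrix.trace ((D * B)ᵀ * (D * B)) = (k : ℝ) := by
      have h : (D * B)ᵀ * (D * B) = 1 := by
        have h1 : (D * B)ᵀ * (D * B) = Bᵀ * (Dᵀ * D) * B := by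
          simp only [Matrix.transpose_mul, Matrix.mul_assoc]
        rw [h1, hD, Matrix.mul_one, hB, Matrix.transpose_mul, Matrix.transpose_transpose,
          Matrix.mul_assoc, ← Matrix.mul_assoc Vᵀ V Uᵀ, hV, Matrix.one_mul, hUUt]
      rw [h, Matrix.trace_one]; simp
    rw [t1, t2, t3, t4]; ring
  have key2 : frobNorm (Cᵀ * D) ^ 2 = ∑ i, s i * s i := by
    rw [frobNorm_sq, hSVD]
    have h1 : (U * Matrix.diagonal s * Vᵀ)ᵀ * (U * Matrix.diagonal s * Vᵀ)
        = V * (Matrix.diagonal s * (Uᵀ * U) * Matrix.diagonal s) * Vᵀ := by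
      simp only [Matrix.transpose_mul, Matrix.transpose_transpose, Matrix.diagonal_transpose,
        Matrix.mul_assoc]
    rw [h1, hU, Matrix.mul_one,
      Matrix.trace_mul_cycle V (Matrix.diagonal s * Matrix.diagonal s) Vᵀ,
      hV, Matrix.one_mul,
      Matrix.diagonal_mul_diagonal, Matrix.trace_diagonal]
  rw [key1, key2]
  have hsum : ∑ i, s i * s i ≤ ∑ i, s i :=
    Finset.sum_le_sum (fun i _ => by nlinarith [hs i, hs1 i])
  linarith
end

section
/- Let w₀ and v₁ be unit vectors in ℝ^d with ‖w₀ − v₁‖ ≤ ε < 1/2 (which implies ⟨w₀, v₁⟩ > 0). Let v₁' = a·v₁ be the intersection of the ray {a v₁ : a ≥ 0} with the hyperplane H = {w : ⟨w, w₀⟩ = 1}, i.e. a = 1/⟨v₁, w₀⟩. Then ‖v₁' − w₀‖ ≤ (5/4)ε. -/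
open scoped RealInnerProductSpace

/-- Let `w₀` and `v₁` be unit vectors in `ℝ^d` with `‖w₀ − v₁‖ ≤ ε < 1/2`.
Let `v₁' = v₁ / ⟨v₁, w₀⟩` be the intersection of the ray `{a v₁ : a ≥ 0}` with the
hyperplane `{w : ⟨w, w₀⟩ = 1}`.  Then `‖v₁' − w₀‖ ≤ (5/4) ε`. -/
theorem ray_hyperplane_dist {d : ℕ} (w₀ v₁ : EuclideanSpace ℝ (Fin d)) (ε : ℝ)
    (hε0 : 0 < ε) (hε : ε < 1 / 2)
    (hw₀ : ‖w₀‖ = 1) (hv₁ : ‖v₁‖ = 1) (hclose : ‖w₀ - v₁‖ ≤ ε) :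
    ‖(⟪v₁, w₀⟫)⁻¹ • v₁ - w₀‖ ≤ (5 / 4) * ε := by
  set c : ℝ := ⟪v₁, w₀⟫ with hc
  have hsq : ‖w₀ - v₁‖ ^ 2 = 2 - 2 * c := by
    rw [norm_sub_sq_real, hw₀, hv₁, real_inner_comm, ← hc]; ring
  have hεsq : ‖w₀ - v₁‖ ^ 2 ≤ ε ^ 2 := by
    apply pow_le_pow_left₀ (norm_nonneg _) hclose
  have hce : 2 - 2 * c ≤ ε ^ 2 := hsq ▸ hεsq
  have hε2 : ε ^ 2 < 1 / 4 := by nlinarith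
  have hc78 : (7 : ℝ) / 8 < c := by nlinarith
  have hcpos : (0 : ℝ) < c := by linarith
  have hnsq : ‖(c⁻¹ • v₁ - w₀ : EuclideanSpace ℝ (Fin d))‖ ^ 2 = c⁻¹ ^ 2 - 1 := by
    rw [norm_sub_sq_real, norm_smul, real_inner_smul_left, hv₁, hw₀, ← hc]
    rw [Real.norm_eq_abs, abs_of_pos (inv_pos.mpr hcpos)]
    field_simp; ring
  have hinv : c⁻¹ ^ 2 - 1 = (1 - c) * (1 + c) / c ^ 2 := by
    field_simp; ring
  have hbound : ‖(c⁻¹ • v₁ - w₀ : EuclideanSpace ℝ (Fin d))‖ ^ 2 ≤ (5 / 4 * ε) ^ 2 := by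
    rw [hnsq, hinv]
    rw [div_le_iff₀ (by positivity)]
    nlinarith [sq_nonneg ε, sq_nonneg (1 - c)]
  have := norm_nonneg (c⁻¹ • v₁ - w₀ : EuclideanSpace ℝ (Fin d))
  nlinarith
end

section
/- Let U₁,…,U_k, R₁, R₂ be d×d symmetric positive semidefinite matrices with R₂ − R₁ ⪰ 0, and suppose that for all x ∈ [α, β]^k the matrix Σᵢ xᵢUᵢ + R₂ is positive definite (where β ≥ α ≥ 0). Define f(x₁,…,x_k) = Tr((Σᵢ xᵢUᵢ + R₁)(Σᵢ xᵢUᵢ + R₂)⁻¹). Then each partial derivative ∂f/∂x_j is nonnegative on [α,β]^k, and hence f attains its minimum over [α,β]^k at (α,…,α). -/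
/-!
With `A x = ∑ i, x i • U i + R₂` and `C = R₂ - R₁`, the numerator is `A x - C`, so
`f = d - Tr (C A⁻¹)` wherever `A` is invertible and the derivative of `f` in direction `v` is
`Tr (C A⁻¹ V A⁻¹)` with `V = ∑ i, v i • U i`. For `v ≥ 0` both `C` and `A⁻¹ V A⁻¹` are positive
semidefinite, and the trace of a product of two such matrices is nonnegative. The minimum at
`(α, …, α)` then follows from the mean value theorem on the segment to any point of the cube.
-/

open Matrix

namespace Matrix
variable {n : Type*} [Fintype n]

open scoped ComplexOrder MatrixOrder in
theorem PosSemidef.trace_mul_nonneg {𝕜 : Type*} [RCLike 𝕜] {P Q : Matrix n n 𝕜}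
    (hP : P.PosSemidef) (hQ : Q.PosSemidef) : 0 ≤ (P * Q).trace := by
  classical
  obtain ⟨B, rfl⟩ := CStarAlgebra.nonneg_iff_eq_star_mul_self.mp hP.nonneg
  rw [mul_assoc, trace_mul_comm, star_eq_conjTranspose]
  exact (hQ.mul_mul_conjTranspose_same B).trace_nonneg

variable [DecidableEq n]

open scoped ComplexOrder in
theorem PosSemidef.trace_mul_inv_mul_mul_inv_nonneg {𝕜 : Type*} [RCLike 𝕜]
    {C A V : Matrix n n 𝕜} (hC : C.PosSemidef) (hA : A.IsHermitian) (hV : V.PosSemidef) :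
    0 ≤ (C * A⁻¹ * V * A⁻¹).trace := by
  have hAVA : (A⁻¹ * V * A⁻¹).PosSemidef := by
    simpa only [hA.inv.eq] using hV.mul_mul_conjTranspose_same A⁻¹
  simpa only [mul_assoc] using hC.trace_mul_nonneg hAVA

theorem trace_sub_mul_nonsing_inv {R : Type*} [CommRing R] {A : Matrix n n R}
    (hA : IsUnit A.det) (C : Matrix n n R) :
    ((A - C) * A⁻¹).trace = Fintype.card n - (C * A⁻¹).trace := by
  rw [sub_mul, mul_nonsing_inv A hA, trace_sub, trace_one]

end Matrix

section Calculus

-- Any norm would do: derivatives only see the (product) topology of a finite-dimensional space.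
attribute [local instance] Matrix.linftyOpNormedRing Matrix.linftyOpNormedAlgebra

variable {𝕜 E n : Type*} [RCLike 𝕜]
  [NormedAddCommGroup E] [NormedSpace 𝕜 E] [Fintype n] [DecidableEq n]

theorem HasFDerivAt.matrix_inv {A : E → Matrix n n 𝕜} {A' : E →L[𝕜] Matrix n n 𝕜} {x : E}
    (hA : HasFDerivAt A A' x) (hx : IsUnit (A x)) :
    HasFDerivAt (fun y => (A y)⁻¹)
      (-(ContinuousLinearMap.mulLeftRight 𝕜 _ (A x)⁻¹ (A x)⁻¹).comp A') x := by
  obtain ⟨u, hu⟩ := hx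
  have hinv : (↑u⁻¹ : Matrix n n 𝕜) = (A x)⁻¹ := by rw [coe_units_inv, hu]
  rw [← hinv]
  simp only [nonsing_inv_eq_ringInverse]
  exact hu ▸ (hasFDerivAt_ringInverse (𝕜 := 𝕜) u) |>.comp x hA

theorem HasFDerivAt.exists_trace_sub_mul_inv {A : E → Matrix n n 𝕜}
    {A' : E →L[𝕜] Matrix n n 𝕜} {x : E} (hA : HasFDerivAt A A' x) (hx : IsUnit (A x))
    (C : Matrix n n 𝕜) :
    ∃ G : E →L[𝕜] 𝕜, HasFDerivAt (fun y => ((A y - C) * (A y)⁻¹).trace) G x ∧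
      ∀ v, G v = (C * (A x)⁻¹ * A' v * (A x)⁻¹).trace := by
  let traceMulLeft : Matrix n n 𝕜 →L[𝕜] 𝕜 :=
    (traceLinearMap n 𝕜 𝕜).toContinuousLinearMap.comp (ContinuousLinearMap.mul 𝕜 _ C)
  have hunit : ∀ᶠ y in nhds x, IsUnit (A y) :=
    hA.continuousAt.preimage_mem_nhds (Units.isOpen.mem_nhds hx)
  have heq : (fun y => ((A y - C) * (A y)⁻¹).trace) =ᶠ[nhds x]
      fun y => (Fintype.card n : 𝕜) - traceMulLeft (A y)⁻¹ := by
    filter_upwards [hunit] with y hy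
    exact trace_sub_mul_nonsing_inv ((isUnit_iff_isUnit_det _).1 hy) C
  have hderiv := (traceMulLeft.hasFDerivAt.comp x (hA.matrix_inv hx)).const_sub (Fintype.card n : 𝕜)
  refine ⟨_, hderiv.congr_of_eventuallyEq heq, fun v => ?_⟩
  show -(C * -((A x)⁻¹ * A' v * (A x)⁻¹)).trace = _
  simp only [mul_neg, trace_neg, neg_neg, mul_assoc]

theorem hasFDerivAt_sum_smul_add {ι : Type*} [Fintype ι] (U : ι → Matrix n n 𝕜)
    (R : Matrix n n 𝕜) (x : ι → 𝕜) :
    HasFDerivAt (fun y : ι → 𝕜 => ∑ i, y i • U i + R)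
      (Fintype.linearCombination 𝕜 U).toContinuousLinearMap x :=
  (Fintype.linearCombination 𝕜 U).toContinuousLinearMap.hasFDerivAt.add_const R

theorem exists_hasFDerivAt_trace_sum_smul_add_mul_inv {ι : Type*} [Fintype ι]
    (U : ι → Matrix n n 𝕜) (R₁ R₂ : Matrix n n 𝕜) {x : ι → 𝕜}
    (hx : IsUnit (∑ i, x i • U i + R₂)) :
    ∃ G : (ι → 𝕜) →L[𝕜] 𝕜,
      HasFDerivAt (fun y => ((∑ i, y i • U i + R₁) * (∑ i, y i • U i + R₂)⁻¹).trace) G x ∧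
      ∀ v, G v = ((R₂ - R₁) * (∑ i, x i • U i + R₂)⁻¹ * (∑ i, v i • U i) *
        (∑ i, x i • U i + R₂)⁻¹).trace := by
  have hsub (y : ι → 𝕜) : ∑ i, y i • U i + R₂ - (R₂ - R₁) = ∑ i, y i • U i + R₁ := by abel
  simpa only [hsub, LinearMap.coe_toContinuousLinearMap', Fintype.linearCombination_apply] using
    (hasFDerivAt_sum_smul_add U R₂ x).exists_trace_sub_mul_inv hx (R₂ - R₁)

end Calculus

theorem monotoneOn_of_fderiv_nonneg {E : Type*} [NormedAddCommGroup E] [NormedSpace ℝ E]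
    [PartialOrder E] [IsOrderedAddMonoid E] {s : Set E} (hs : Convex ℝ s) {f : E → ℝ}
    (hf : ∀ x ∈ s, DifferentiableAt ℝ f x) (hf' : ∀ x ∈ s, ∀ v, 0 ≤ v → 0 ≤ fderiv ℝ f x v) :
    MonotoneOn f s := by
  intro a ha b hb hab
  obtain ⟨z, hz, hmvt⟩ := domain_mvt (fun x hx => (hf x hx).hasFDerivAt.hasFDerivWithinAt) hs ha hb
  linarith [hf' z (hs.segment_subset ha hb hz) (b - a) (sub_nonneg.2 hab)]

theorem trace_ratio_monotone_general {d k : ℕ} (α β : ℝ)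
    (U : Fin k → Matrix (Fin d) (Fin d) ℝ) (R₁ R₂ : Matrix (Fin d) (Fin d) ℝ)
    (hU : ∀ i, (U i).PosSemidef) (hR : (R₂ - R₁).PosSemidef)
    (hPD : ∀ x : Fin k → ℝ, (∀ i, x i ∈ Set.Icc α β) →
      (∑ i, x i • U i + R₂).PosDef)
    (f : (Fin k → ℝ) → ℝ)
    (hf : ∀ x, f x = ((∑ i, x i • U i + R₁) * (∑ i, x i • U i + R₂)⁻¹).trace) :
    (∀ x : Fin k → ℝ, (∀ i, x i ∈ Set.Icc α β) →
        ∀ j, 0 ≤ fderiv ℝ f x (Pi.single j 1)) ∧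
      (∀ x : Fin k → ℝ, (∀ i, x i ∈ Set.Icc α β) → f (fun _ => α) ≤ f x) := by
  have mem_cube {x : Fin k → ℝ} : x ∈ Set.Icc (fun _ => α) (fun _ => β) ↔
      ∀ i, x i ∈ Set.Icc α β := by
    simp only [Set.mem_Icc, Pi.le_def, forall_and]
  have hderiv : ∀ x ∈ Set.Icc (fun _ => α) (fun _ => β),
      DifferentiableAt ℝ f x ∧ ∀ v, 0 ≤ v → 0 ≤ fderiv ℝ f x v := by
    intro x hx
    have hA := hPD x (mem_cube.1 hx)
    obtain ⟨G, hG, hGv⟩ := exists_hasFDerivAt_trace_sum_smul_add_mul_inv U R₁ R₂ hA.isUnit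
    rw [← funext hf] at hG
    refine ⟨hG.differentiableAt, fun v hv => ?_⟩
    rw [hG.fderiv, hGv]
    exact hR.trace_mul_inv_mul_mul_inv_nonneg hA.isHermitian
      (posSemidef_sum _ fun i _ => (hU i).smul (hv i))
  refine ⟨fun x hx j => (hderiv x (mem_cube.2 hx)).2 _ (Pi.single_nonneg.2 zero_le_one),
    fun x hx => ?_⟩
  have hmono := monotoneOn_of_fderiv_nonneg (convex_Icc _ _) (fun x hx => (hderiv x hx).1)
    (fun x hx => (hderiv x hx).2)
  have hx' := mem_cube.2 hx
  exact hmono ⟨le_rfl, hx'.1.trans hx'.2⟩ hx' hx'.1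

/-- Let `U₁,…,U_k, R₁, R₂` be `d×d` PSD matrices with `R₂ − R₁ ⪰ 0`, such that
`Σᵢ xᵢUᵢ + R₂ ≻ 0` for all `x ∈ [α,β]^k` (where `β ≥ α ≥ 0`).  Let
`f(x) = Tr((Σᵢ xᵢUᵢ + R₁)(Σᵢ xᵢUᵢ + R₂)⁻¹)`.  Then every partial derivative of
`f` is nonnegative on the cube `[α,β]^k`, and `f` attains its minimum over the
cube at `(α,…,α)`. -/
theorem trace_ratio_monotone {d k : ℕ} (α β : ℝ) (hα : 0 ≤ α) (hαβ : α ≤ β)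
    (U : Fin k → Matrix (Fin d) (Fin d) ℝ) (R₁ R₂ : Matrix (Fin d) (Fin d) ℝ)
    (hU : ∀ i, (U i).PosSemidef) (hR₁ : R₁.PosSemidef) (hR₂ : R₂.PosSemidef)
    (hR : (R₂ - R₁).PosSemidef)
    (hPD : ∀ x : Fin k → ℝ, (∀ i, x i ∈ Set.Icc α β) →
      (∑ i, x i • U i + R₂).PosDef)
    (f : (Fin k → ℝ) → ℝ)
    (hf : ∀ x, f x = ((∑ i, x i • U i + R₁) * (∑ i, x i • U i + R₂)⁻¹).trace) :
    (∀ x : Fin k → ℝ, (∀ i, x i ∈ Set.Icc α β) →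
        ∀ j, 0 ≤ fderiv ℝ f x (Pi.single j 1)) ∧
      (∀ x : Fin k → ℝ, (∀ i, x i ∈ Set.Icc α β) → f (fun _ => α) ≤ f x) :=
  trace_ratio_monotone_general α β U R₁ R₂ hU hR hPD f hf
end
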